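/- Logarithmic Gronwall lemma: let T ≥ 0, let f : [0,T] → ℝ be continuous and nonnegative, and let A ≥ 0, B ≥ 0 be constants such that for every t ∈ [0,T], f(t) ≤ A + B ∫₀ᵗ f(s) · ln(e + f(s)) ds. Then for every t ∈ [0,T], e + f(t) ≤ (e + A)^{exp(B t)}; in particular f remains bounded on [0,T] by a quantity depending only on A, B and T. -/

import Mathlib

/-!
Put `u t = e + A + B ∫₀ᵗ f log (e + f)`. The hypothesis says `e + f ≤ u`, so `u ≥ e` and
`u' = B f log (e + f) ≤ B u log u`. Hence `(log u)' ≤ B log u`, and the linear Grönwall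
inequality gives `log u t ≤ log (e + A) · exp (B t)`.
-/

open Set Real

theorem hasDerivWithinAt_integral_Icc {g : ℝ → ℝ} {a b x : ℝ} (hg : ContinuousOn g (Icc a b))
    (hx : x ∈ Icc a b) :
    HasDerivWithinAt (fun t => ∫ s in a..t, g s) (g x) (Icc a b) x := by
  have := Fact.mk hx
  exact intervalIntegral.integral_hasDerivWithinAt_right
    ((hg.mono (Icc_subset_Icc le_rfl hx.2)).intervalIntegrable_of_Icc hx.1)
    (hg.stronglyMeasurableAtFilter_nhdsWithin measurableSet_Icc x) (hg x hx)

theorem le_rpow_exp_of_deriv_le_mul_mul_log {u u' : ℝ → ℝ} {K a b : ℝ}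
    (hu : ContinuousOn u (Icc a b)) (hu' : ∀ x ∈ Ico a b, HasDerivWithinAt u (u' x) (Ici x) x)
    (hpos : ∀ x ∈ Icc a b, 0 < u x) (bound : ∀ x ∈ Ico a b, u' x ≤ K * u x * log (u x)) :
    ∀ x ∈ Icc a b, u x ≤ u a ^ exp (K * (x - a)) := by
  have hlog' : ∀ x ∈ Ico a b, HasDerivWithinAt (log ∘ u) ((u x)⁻¹ * u' x) (Ici x) x :=
    fun x hx => (hasDerivAt_log (hpos x (Ico_subset_Icc_self hx)).ne').comp_hasDerivWithinAt x
      (hu' x hx)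
  have hlog_bound : ∀ x ∈ Ico a b, (u x)⁻¹ * u' x ≤ K * log (u x) + 0 := by
    intro x hx
    rw [add_zero, inv_mul_le_iff₀ (hpos x (Ico_subset_Icc_self hx))]
    linarith [bound x hx]
  have hgronwall := le_gronwallBound_of_liminf_deriv_right_le
    (hu.log fun x hx => (hpos x hx).ne') (fun x hx _ hr => (hlog' x hx).liminf_right_slope_le hr)
    le_rfl hlog_bound
  intro x hx
  have ha : a ≤ b := hx.1.trans hx.2
  rw [le_rpow_iff_log_le (hpos x hx) (hpos a ⟨le_rfl, ha⟩), mul_comm, ← gronwallBound_ε0]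
  exact hgronwall x hx

theorem mul_log_le_mul_log {x y z : ℝ} (hx : 0 ≤ x) (hy : 1 ≤ y) (hxz : x ≤ z) (hyz : y ≤ z) :
    x * log y ≤ z * log z :=
  mul_le_mul hxz (log_le_log (zero_lt_one.trans_le hy) hyz) (log_nonneg hy) (hx.trans hxz)

theorem log_gronwall_general
    (T : ℝ) (f : ℝ → ℝ)
    (hf_cont : ContinuousOn f (Set.Icc 0 T))
    (hf_nonneg : ∀ t ∈ Set.Icc (0 : ℝ) T, 0 ≤ f t)
    (A B : ℝ) (hB : 0 ≤ B)
    (hmain : ∀ t ∈ Set.Icc (0 : ℝ) T,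
      f t ≤ A + B * ∫ s in (0 : ℝ)..t, f s * Real.log (Real.exp 1 + f s)) :
    ∀ t ∈ Set.Icc (0 : ℝ) T,
      Real.exp 1 + f t ≤ (Real.exp 1 + A) ^ Real.exp (B * t) := by
  set g : ℝ → ℝ := fun s => f s * log (exp 1 + f s)
  set u : ℝ → ℝ := fun t => exp 1 + A + B * ∫ s in (0 : ℝ)..t, g s
  have he : 1 ≤ exp 1 := one_le_exp zero_le_one
  have hg : ContinuousOn g (Icc 0 T) := hf_cont.mul <| (continuousOn_const.add hf_cont).log
    fun x hx => (by linarith [hf_nonneg x hx] : exp 1 + f x ≠ 0)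
  have hu' : ∀ x ∈ Icc 0 T, HasDerivWithinAt u (B * g x) (Icc 0 T) x :=
    fun x hx => ((hasDerivWithinAt_integral_Icc hg hx).const_mul B).const_add _
  have hfu : ∀ x ∈ Icc 0 T, exp 1 + f x ≤ u x := fun x hx => by linarith [hmain x hx]
  have hu_pos : ∀ x ∈ Icc 0 T, 0 < u x := fun x hx => by linarith [hfu x hx, hf_nonneg x hx]
  have hbound : ∀ x ∈ Icc 0 T, B * g x ≤ B * u x * log (u x) := fun x hx => by
    rw [mul_assoc]
    exact mul_le_mul_of_nonneg_left (mul_log_le_mul_log (hf_nonneg x hx)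
      (by linarith [hf_nonneg x hx]) (by linarith [hfu x hx]) (hfu x hx)) hB
  have hu0 : u 0 = exp 1 + A := by simp [u]
  intro t ht
  calc exp 1 + f t ≤ u t := hfu t ht
    _ ≤ u 0 ^ exp (B * (t - 0)) :=
      le_rpow_exp_of_deriv_le_mul_mul_log (fun x hx => (hu' x hx).continuousWithinAt)
        (fun x hx => (hu' x (Ico_subset_Icc_self hx)).mono_of_mem_nhdsWithin
          (Icc_mem_nhdsGE_of_mem hx))
        hu_pos (fun x hx => hbound x (Ico_subset_Icc_self hx)) t ht
    _ = (exp 1 + A) ^ exp (B * t) := by rw [hu0, sub_zero]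

/-- Logarithmic Gronwall lemma (Brezis–Gallouët type): if a continuous nonnegative
function `f` on `[0, T]` satisfies `f t ≤ A + B ∫₀ᵗ f s * log (e + f s) ds`, then
`e + f t ≤ (e + A) ^ (exp (B * t))` on `[0, T]`. -/
theorem log_gronwall
    (T : ℝ) (hT : 0 ≤ T) (f : ℝ → ℝ)
    (hf_cont : ContinuousOn f (Set.Icc 0 T))
    (hf_nonneg : ∀ t ∈ Set.Icc (0 : ℝ) T, 0 ≤ f t)
    (A B : ℝ) (hA : 0 ≤ A) (hB : 0 ≤ B)
    (hmain : ∀ t ∈ Set.Icc (0 : ℝ) T,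
      f t ≤ A + B * ∫ s in (0 : ℝ)..t, f s * Real.log (Real.exp 1 + f s)) :
    ∀ t ∈ Set.Icc (0 : ℝ) T,
      Real.exp 1 + f t ≤ (Real.exp 1 + A) ^ Real.exp (B * t) :=
  log_gronwall_general T f hf_cont hf_nonneg A B hB hmain
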